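/- arXiv:2105.05736 — 2 statements merged into one kernel-verified Lean document; each statement's English description precedes it below -/
import Mathlib

section
/- Under the same setting, the variance of the sampled decoupled loss φ(f_y(x)) + Σ_{i=1}^m w_{y,s_i}·φ̃(-f_{s_i}(x)) over N ~ q^m equals Σ_{y'≠y} w_{yy'}·ρ_{yy'}·φ̃(-f_{y'}(x))² − (1/m)·(Σ_{y'≠y} ρ_{yy'}·φ̃(-f_{y'}(x)))², where ρ_{yy'} = m·w_{yy'}·q_{y'}. -/
/-!
Under the weights `∏ i, q (N i)` the coordinates of `N` behave like independent draws from `q`: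
by `Fintype.prod_sum`, the weighted sum of a product of functions of distinct coordinates
factorises. Hence the second moment of `∑ i, g (N i)` has `m` diagonal terms `E[g²]` and `m² - m`
off-diagonal terms `E[g]²`, and the variance of `c + ∑ i, g (N i)` is `m (E[g²] - E[g]²)`.
With `g = w · ψ(-f)` and `ρ = m w q` this is the stated formula, as `q y = 0` makes the
restriction to `y' ≠ y` harmless.
-/

open Finset

section ProductWeights

variable {ι α : Type*} [Fintype ι] [DecidableEq ι] [Fintype α] (q : α → ℝ)

theorem sum_pi_prod_mul_prod_finset (hq : ∑ a, q a = 1) (s : Finset ι) (h : ι → α → ℝ) :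
    ∑ N : ι → α, (∏ k, q (N k)) * ∏ k ∈ s, h k (N k) = ∏ k ∈ s, ∑ a, q a * h k a := by
  calc _ = ∑ N : ι → α, ∏ k, q (N k) * (if k ∈ s then h k (N k) else 1) := by
          simp_rw [prod_mul_distrib, prod_ite_mem, univ_inter]
    _ = ∏ k, ∑ a, q a * (if k ∈ s then h k a else 1) := by rw [Fintype.prod_sum]
    _ = ∏ k, if k ∈ s then ∑ a, q a * h k a else 1 := by
          congr! with k; split_ifs <;> simp [hq]
    _ = _ := by rw [prod_ite_mem, univ_inter]

theorem sum_pi_prod_eq_one (hq : ∑ a, q a = 1) : ∑ N : ι → α, ∏ k, q (N k) = 1 := by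
  simpa using sum_pi_prod_mul_prod_finset q hq ∅ (fun _ _ => 1)

theorem sum_pi_prod_mul_apply (hq : ∑ a, q a = 1) (g : α → ℝ) (i : ι) :
    ∑ N : ι → α, (∏ k, q (N k)) * g (N i) = ∑ a, q a * g a := by
  simpa using sum_pi_prod_mul_prod_finset q hq {i} (fun _ => g)

theorem sum_pi_prod_mul_apply_mul_apply (hq : ∑ a, q a = 1) (g : α → ℝ) {i j : ι}
    (hij : i ≠ j) :
    ∑ N : ι → α, (∏ k, q (N k)) * (g (N i) * g (N j)) = (∑ a, q a * g a) ^ 2 := by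
  simpa [prod_pair hij, sq] using sum_pi_prod_mul_prod_finset q hq {i, j} (fun _ => g)

theorem sum_pi_prod_mul_sum_apply (hq : ∑ a, q a = 1) (g : α → ℝ) :
    ∑ N : ι → α, (∏ k, q (N k)) * ∑ i, g (N i) = Fintype.card ι * ∑ a, q a * g a := by
  simp_rw [mul_sum]
  rw [sum_comm]
  simp [sum_pi_prod_mul_apply q hq, mul_sum]

theorem sum_pi_prod_mul_sum_apply_sq (hq : ∑ a, q a = 1) (g : α → ℝ) :
    ∑ N : ι → α, (∏ k, q (N k)) * (∑ i, g (N i)) ^ 2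
      = Fintype.card ι * ∑ a, q a * g a ^ 2
        + ((Fintype.card ι : ℝ) ^ 2 - Fintype.card ι) * (∑ a, q a * g a) ^ 2 := by
  have hpair : ∀ i j : ι, ∑ N : ι → α, (∏ k, q (N k)) * (g (N i) * g (N j))
      = (∑ a, q a * g a) ^ 2
        + if i = j then ∑ a, q a * g a ^ 2 - (∑ a, q a * g a) ^ 2 else 0 := by
    intro i j
    obtain rfl | hij := eq_or_ne i j
    · simpa [← sq] using sum_pi_prod_mul_apply q hq (g · ^ 2) i
    · rw [sum_pi_prod_mul_apply_mul_apply q hq g hij, if_neg hij, add_zero]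
  calc _ = ∑ i, ∑ j, ∑ N : ι → α, (∏ k, q (N k)) * (g (N i) * g (N j)) := by
          simp_rw [sq, sum_mul_sum, mul_sum]
          rw [sum_comm]
          refine sum_congr rfl fun i _ => sum_comm
    _ = _ := by
          simp only [hpair, sum_add_distrib, sum_ite_eq, mem_univ, if_true, sum_const, card_univ,
            nsmul_eq_mul]
          ring

theorem sum_pi_prod_variance_const_add_sum_apply (hq : ∑ a, q a = 1) (c : ℝ) (g : α → ℝ) :
    ∑ N : ι → α, (∏ k, q (N k)) * (c + ∑ i, g (N i)) ^ 2
        - (∑ N : ι → α, (∏ k, q (N k)) * (c + ∑ i, g (N i))) ^ 2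
      = Fintype.card ι * (∑ a, q a * g a ^ 2 - (∑ a, q a * g a) ^ 2) := by
  have hmean : ∑ N : ι → α, (∏ k, q (N k)) * (c + ∑ i, g (N i))
      = c + Fintype.card ι * ∑ a, q a * g a := by
    simp only [mul_add, sum_add_distrib, ← sum_mul, sum_pi_prod_eq_one q hq,
      sum_pi_prod_mul_sum_apply q hq, one_mul]
  have hexpand : ∀ N : ι → α, (∏ k, q (N k)) * (c + ∑ i, g (N i)) ^ 2
      = c ^ 2 * ∏ k, q (N k) + 2 * c * ((∏ k, q (N k)) * ∑ i, g (N i))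
        + (∏ k, q (N k)) * (∑ i, g (N i)) ^ 2 := fun N => by ring
  simp only [hexpand, sum_add_distrib, ← mul_sum, sum_pi_prod_eq_one q hq,
    sum_pi_prod_mul_sum_apply q hq, sum_pi_prod_mul_sum_apply_sq q hq, hmean]
  ring

end ProductWeights

theorem variance_sampled_decoupled_loss_general {L m : ℕ} (hm : 0 < m) (y : Fin L)
    (f : Fin L → ℝ) (q w : Fin L → ℝ) (φ ψ : ℝ → ℝ)
    (hq1 : ∑ y', q y' = 1) (hqy : q y = 0) :
    (∑ N : Fin m → Fin L, (∏ i, q (N i)) *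
        (φ (f y) + ∑ i, w (N i) * ψ (-(f (N i)))) ^ 2)
      - (∑ N : Fin m → Fin L, (∏ i, q (N i)) *
        (φ (f y) + ∑ i, w (N i) * ψ (-(f (N i))))) ^ 2
    = (∑ y' ∈ univ \ {y}, w y' * ((m : ℝ) * w y' * q y') * ψ (-(f y')) ^ 2)
      - (1 / (m : ℝ)) *
        (∑ y' ∈ univ \ {y}, ((m : ℝ) * w y' * q y') * ψ (-(f y'))) ^ 2 := by
  set g : Fin L → ℝ := fun y' => w y' * ψ (-(f y'))
  have hsum_sdiff (F : Fin L → ℝ) : ∑ y' ∈ univ \ {y}, (m : ℝ) * (q y' * F y')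
      = m * ∑ y', q y' * F y' := by
    rw [← mul_sum]
    refine congrArg _ (sum_subset (subset_univ _) fun y' _ hy' => ?_)
    simp [show y' = y by simpa using hy', hqy]
  have hρ2 (y' : Fin L) : w y' * ((m : ℝ) * w y' * q y') * ψ (-(f y')) ^ 2
      = m * (q y' * g y' ^ 2) := by ring
  have hρ1 (y' : Fin L) : (m : ℝ) * w y' * q y' * ψ (-(f y')) = m * (q y' * g y') := by ring
  rw [sum_pi_prod_variance_const_add_sum_apply q hq1 (φ (f y)) g, Fintype.card_fin]
  simp only [hρ2, hρ1, hsum_sdiff]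
  field_simp

/-- Variance of the sampled decoupled loss over i.i.d. negatives `N ~ q^m`. -/
theorem variance_sampled_decoupled_loss {L m : ℕ} (hm : 0 < m) (y : Fin L)
    (f : Fin L → ℝ) (q w : Fin L → ℝ) (φ ψ : ℝ → ℝ)
    (hq0 : ∀ y', 0 ≤ q y') (hq1 : ∑ y', q y' = 1) (hqy : q y = 0)
    (hw : ∀ y', 0 ≤ w y') (hφ : ∀ t, 0 ≤ φ t) (hψ : ∀ t, 0 ≤ ψ t) :
    (∑ N : Fin m → Fin L, (∏ i, q (N i)) *
        (φ (f y) + ∑ i, w (N i) * ψ (-(f (N i)))) ^ 2)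
      - (∑ N : Fin m → Fin L, (∏ i, q (N i)) *
        (φ (f y) + ∑ i, w (N i) * ψ (-(f (N i))))) ^ 2
    = (∑ y' ∈ univ \ {y}, w y' * ((m : ℝ) * w y' * q y') * ψ (-(f y')) ^ 2)
      - (1 / (m : ℝ)) *
        (∑ y' ∈ univ \ {y}, ((m : ℝ) * w y' * q y') * ψ (-(f y'))) ^ 2 :=
  variance_sampled_decoupled_loss_general hm y f q w φ ψ hq1 hqy
end

section
/- Let q be a distribution on labels with q_y = 0, and N = (s_1,...,s_m) i.i.d. from q. The expectation over N of log[1 + Σ_{i=1}^m w_{y,s_i}·exp(f_{s_i}(x) − f_y(x))] is at most log[1 + Σ_{y'≠y} ρ_{yy'}·exp(f_{y'}(x) − f_y(x))], where ρ_{yy'} = m·q_{y'}·w_{yy'}. -/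
open Finset

theorem aux_sum_prod_q {L m : ℕ} (q : Fin L → ℝ) (hq1 : ∑ y', q y' = 1) :
    ∑ N : Fin m → Fin L, ∏ i, q (N i) = 1 := by
  calc ∑ N : Fin m → Fin L, ∏ i, q (N i)
      = ∑ N ∈ Fintype.piFinset (fun _ : Fin m => (univ : Finset (Fin L))),
          ∏ i, q (N i) := by rw [Fintype.piFinset_univ]
    _ = ∏ _i : Fin m, ∑ j, q j := (Finset.prod_univ_sum _ _).symm
    _ = 1 := by simp [hq1]

theorem aux_marginal {L m : ℕ} (q g : Fin L → ℝ) (hq1 : ∑ y', q y' = 1) :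
    ∑ N : Fin m → Fin L, (∏ i, q (N i)) * (∑ i, g (N i))
      = (m : ℝ) * ∑ y', q y' * g y' := by
  have key : ∀ i : Fin m,
      ∑ N : Fin m → Fin L, (∏ j, q (N j)) * g (N i) = ∑ y', q y' * g y' := by
    intro i
    set H : Fin m → Fin L → ℝ := fun j x => if j = i then q x * g x else q x with hH
    have h1 : ∀ N : Fin m → Fin L, (∏ j, q (N j)) * g (N i) = ∏ j, H j (N j) := by
      intro N
      have hq := Finset.mul_prod_erase univ (fun j => q (N j)) (mem_univ i)
      have hHp := Finset.mul_prod_erase univ (fun j => H j (N j)) (mem_univ i)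
      have herase : ∏ j ∈ univ.erase i, H j (N j) = ∏ j ∈ univ.erase i, q (N j) := by
        apply Finset.prod_congr rfl
        intro j hj
        simp [hH, (Finset.mem_erase.mp hj).1]
      rw [← hHp, herase, hH]
      simp only [if_pos rfl, if_true]
      rw [← hq]; ring
    calc ∑ N : Fin m → Fin L, (∏ j, q (N j)) * g (N i)
        = ∑ N ∈ Fintype.piFinset (fun _ : Fin m => (univ : Finset (Fin L))),
            ∏ j, H j (N j) := by
          rw [Fintype.piFinset_univ]; exact Finset.sum_congr rfl fun N _ => h1 N
      _ = ∏ j : Fin m, ∑ x, H j x := (Finset.prod_univ_sum _ _).symm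
      _ = ∏ j : Fin m, (if j = i then ∑ y', q y' * g y' else 1) := by
          apply Finset.prod_congr rfl
          intro j _
          by_cases h : j = i <;> simp [hH, h, hq1]
      _ = ∑ y', q y' * g y' := by
          rw [Finset.prod_ite_eq' univ i (fun _ => ∑ y', q y' * g y')]
          simp
  calc ∑ N : Fin m → Fin L, (∏ i, q (N i)) * (∑ i, g (N i))
      = ∑ N : Fin m → Fin L, ∑ i, (∏ j, q (N j)) * g (N i) := by
        exact Finset.sum_congr rfl fun N _ => by rw [Finset.mul_sum]
    _ = ∑ i : Fin m, ∑ N : Fin m → Fin L, (∏ j, q (N j)) * g (N i) :=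
        Finset.sum_comm
    _ = ∑ _i : Fin m, ∑ y', q y' * g y' := Finset.sum_congr rfl fun i _ => key i
    _ = (m : ℝ) * ∑ y', q y' * g y' := by simp [mul_comm]

/-- Jensen bound: the expected sampled softmax cross-entropy is at most the
implicit loss with `ρ_{yy'} = m · q_{y'} · w_{yy'}`. -/
theorem expected_sampled_softmax_le {L m : ℕ} (y : Fin L) (f : Fin L → ℝ)
    (q w : Fin L → ℝ)
    (hq0 : ∀ y', 0 ≤ q y') (hq1 : ∑ y', q y' = 1) (hqy : q y = 0)
    (hw : ∀ y', 0 ≤ w y') :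
    ∑ N : Fin m → Fin L, (∏ i, q (N i)) *
        Real.log (1 + ∑ i, w (N i) * Real.exp (f (N i) - f y))
      ≤ Real.log (1 + ∑ y' ∈ univ \ {y},
          ((m : ℝ) * q y' * w y') * Real.exp (f y' - f y)) := by
  set g : Fin L → ℝ := fun y' => w y' * Real.exp (f y' - f y) with hg
  have hg0 : ∀ y', 0 ≤ g y' := fun y' =>
    mul_nonneg (hw y') (Real.exp_pos _).le
  have hwN : ∀ N : Fin m → Fin L, 0 ≤ ∏ i, q (N i) := fun N =>
    Finset.prod_nonneg fun i _ => hq0 _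
  have hmem : ∀ N : Fin m → Fin L, (1 + ∑ i, g (N i)) ∈ Set.Ioi (0 : ℝ) := by
    intro N
    have : 0 ≤ ∑ i, g (N i) := Finset.sum_nonneg fun i _ => hg0 _
    simp only [Set.mem_Ioi]; linarith
  have jensen := (strictConcaveOn_log_Ioi.concaveOn).le_map_sum
    (t := (univ : Finset (Fin m → Fin L)))
    (w := fun N => ∏ i, q (N i)) (p := fun N => 1 + ∑ i, g (N i))
    (fun N _ => hwN N) (aux_sum_prod_q q hq1) (fun N _ => hmem N)
  simp only [smul_eq_mul] at jensen
  have hmean : ∑ N : Fin m → Fin L, (∏ i, q (N i)) * (1 + ∑ i, g (N i))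
      = 1 + (m : ℝ) * ∑ y', q y' * g y' := by
    have hm2 := aux_marginal (m := m) q g hq1
    calc ∑ N : Fin m → Fin L, (∏ i, q (N i)) * (1 + ∑ i, g (N i))
        = ∑ N : Fin m → Fin L, ((∏ i, q (N i)) + (∏ i, q (N i)) * (∑ i, g (N i))) := by
          exact Finset.sum_congr rfl fun N _ => by ring
      _ = (∑ N : Fin m → Fin L, ∏ i, q (N i))
            + ∑ N : Fin m → Fin L, (∏ i, q (N i)) * (∑ i, g (N i)) :=
          Finset.sum_add_distrib
      _ = 1 + (m : ℝ) * ∑ y', q y' * g y' := by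
          rw [aux_sum_prod_q q hq1, hm2]
  have hrhs : ∑ y' ∈ univ \ {y}, ((m : ℝ) * q y' * w y') * Real.exp (f y' - f y)
      = (m : ℝ) * ∑ y', q y' * g y' := by
    rw [Finset.mul_sum]
    rw [Finset.sum_subset (Finset.sdiff_subset)]
    · exact Finset.sum_congr rfl fun y' _ => by simp [hg]; ring
    · intro x _ hx
      have : x = y := by simpa using hx
      simp [this, hqy]
  rw [hmean] at jensen
  rw [hrhs]
  exact jensen
end
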